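/- Let A : 𝒳ⁿ → ℝⁿ be a bounded linear operator. Then the linear time-invariant system ẋ(t) = A x_t is GES if and only if its origin is AS. -/

import Mathlib

open Set Filter MeasureTheory Topology
open scoped NNReal

noncomputable section

/-- `ℝⁿ` with the Euclidean norm. -/
abbrev Vec (n : ℕ) : Type := EuclideanSpace ℝ (Fin n)

/-- The state space `𝒳ⁿ = C([-Δ,0], ℝⁿ)`, equipped with the sup norm. -/
abbrev Hist (Δ : ℝ≥0) (n : ℕ) : Type :=
  ContinuousMap (Icc (-(Δ : ℝ)) (0 : ℝ)) (Vec n)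

theorem zero_mem_IccD (Δ : ℝ≥0) : (0 : ℝ) ∈ Icc (-(Δ : ℝ)) (0 : ℝ) :=
  ⟨neg_nonpos.mpr Δ.coe_nonneg, le_refl 0⟩

/-- `φ(0)`: the current value of a history segment. -/
def ev0 {Δ : ℝ≥0} {n : ℕ} (φ : Hist Δ n) : Vec n :=
  φ ⟨0, zero_mem_IccD Δ⟩

/-! ### Comparison functions -/

/-- Class `𝒦`: continuous, strictly increasing, zero at zero (on `[0,∞)`). -/
def ClassK (α : ℝ → ℝ) : Prop :=
  ContinuousOn α (Ici 0) ∧ StrictMonoOn α (Ici 0) ∧ α 0 = 0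

/-- Class `𝒦∞`: class `𝒦` and unbounded. -/
def ClassKinf (α : ℝ → ℝ) : Prop :=
  ClassK α ∧ Tendsto α atTop atTop

/-- Class `𝒩`: continuous, nondecreasing, zero at zero (on `[0,∞)`). -/
def ClassN (α : ℝ → ℝ) : Prop :=
  ContinuousOn α (Ici 0) ∧ MonotoneOn α (Ici 0) ∧ α 0 = 0

/-- Class `𝒫`: continuous, zero at zero, positive on `(0,∞)`. -/
def ClassP (α : ℝ → ℝ) : Prop :=
  ContinuousOn α (Ici 0) ∧ α 0 = 0 ∧ ∀ s : ℝ, 0 < s → 0 < α s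

/-- Class `𝒦ℒ`. -/
def ClassKL (β : ℝ → ℝ → ℝ) : Prop :=
  (∀ t : ℝ, 0 ≤ t → ClassK fun s => β s t) ∧
    ∀ s : ℝ, 0 ≤ s →
      ContinuousOn (β s) (Ici 0) ∧ AntitoneOn (β s) (Ici 0) ∧
        Tendsto (β s) atTop (𝓝 0)

/-! ### Inputs -/

/-- Admissible input: Lebesgue measurable and locally essentially bounded. -/
def IsInput {m : ℕ} (u : ℝ → Vec m) : Prop :=
  Measurable u ∧ ∀ T : ℝ, 0 < T → ∃ C : ℝ, ∀ᵐ t ∂volume, t ∈ Icc (0 : ℝ) T → ‖u t‖ ≤ C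

/-- Essential supremum of `‖u‖` over a set of times. -/
def essBnd {m : ℕ} (u : ℝ → Vec m) (s : Set ℝ) : ℝ :=
  sInf {C : ℝ | 0 ≤ C ∧ ∀ᵐ τ ∂volume, τ ∈ s → ‖u τ‖ ≤ C}

/-! ### History segments along a trajectory -/

-- The history segment `x_t ∈ 𝒳ⁿ` of a trajectory `x : ℝ → ℝⁿ` (with junk value `0`
-- when `x` is not continuous on `[t-Δ, t]`).
open Classical in
def seg (Δ : ℝ≥0) {n : ℕ} (x : ℝ → Vec n) (t : ℝ) : Hist Δ n :=
  if hx : ContinuousOn x (Icc (t - (Δ : ℝ)) t) then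
    { toFun := fun τ => x (t + τ.1)
      continuous_toFun := by
        have h1 : Continuous fun τ : Icc (-(Δ : ℝ)) (0 : ℝ) => t + τ.1 :=
          continuous_const.add continuous_subtype_val
        have h2 : ∀ τ : Icc (-(Δ : ℝ)) (0 : ℝ), t + τ.1 ∈ Icc (t - (Δ : ℝ)) t := by
          rintro ⟨τ, hτ⟩
          rw [mem_Icc] at hτ ⊢
          constructor
          · linarith [hτ.1]
          · linarith [hτ.2]
        exact hx.comp_continuous h1 h2 }
  else 0

/-! ### Driver's derivative and Dini derivative -/

/-- The deformed history `φ_{h,w}` appearing in Driver's derivative: for `0 ≤ h < Δ`,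
`φ_{h,w}(s) = φ(s+h)` for `s ∈ [-Δ,-h)` and `φ_{h,w}(s) = φ(0) + w(h+s)` for `s ∈ [-h,0]`. -/
def shiftSeg {Δ : ℝ≥0} {n : ℕ} (φ : Hist Δ n) (w : Vec n) (h : ℝ) : Hist Δ n :=
  { toFun := fun s =>
      φ (projIcc (-(Δ : ℝ)) 0 (neg_nonpos.mpr Δ.coe_nonneg) (s.1 + h)) + max (h + s.1) 0 • w
    continuous_toFun := by
      refine Continuous.add ?_ ?_
      · exact φ.continuous.comp (continuous_projIcc.comp
          (continuous_subtype_val.add continuous_const))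
      · exact ((continuous_const.add continuous_subtype_val).max continuous_const).smul
          continuous_const }

/-- Driver's derivative `D⁺V(φ,w)`, valued in the extended reals. -/
def driverD {Δ : ℝ≥0} {n : ℕ} (V : Hist Δ n → ℝ) (φ : Hist Δ n) (w : Vec n) : EReal :=
  limsup (fun h : ℝ => (((V (shiftSeg φ w h) - V φ) / h : ℝ) : EReal)) (𝓝[>] (0 : ℝ))

/-- Upper right-hand Dini derivative of `ν : ℝ → ℝ`, valued in the extended reals. -/
def diniD (ν : ℝ → ℝ) (t : ℝ) : EReal :=
  limsup (fun h : ℝ => (((ν (t + h) - ν t) / h : ℝ) : EReal)) (𝓝[>] (0 : ℝ))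

/-! ### Lipschitz conditions -/

/-- `f : 𝒳ⁿ × ℝᵐ → ℝⁿ` is Lipschitz on bounded sets. -/
def LipOnBounded {Δ : ℝ≥0} {n m : ℕ} (f : Hist Δ n → Vec m → Vec n) : Prop :=
  ∀ r : ℝ, 0 < r → ∃ L : ℝ, 0 < L ∧
    ∀ (φ₁ φ₂ : Hist Δ n) (v₁ v₂ : Vec m),
      ‖φ₁‖ ≤ r → ‖φ₂‖ ≤ r → ‖v₁‖ ≤ r → ‖v₂‖ ≤ r →
        ‖f φ₁ v₁ - f φ₂ v₂‖ ≤ L * (‖φ₁ - φ₂‖ + ‖v₁ - v₂‖)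

/-- An input-free vector field `f₀ : 𝒳ⁿ → ℝⁿ` Lipschitz on bounded sets. -/
def LipOnBounded₀ {Δ : ℝ≥0} {n : ℕ} (f₀ : Hist Δ n → Vec n) : Prop :=
  ∀ r : ℝ, 0 < r → ∃ L : ℝ, 0 < L ∧
    ∀ φ₁ φ₂ : Hist Δ n, ‖φ₁‖ ≤ r → ‖φ₂‖ ≤ r → ‖f₀ φ₁ - f₀ φ₂‖ ≤ L * ‖φ₁ - φ₂‖

/-- A functional `V : 𝒳ⁿ → ℝ` Lipschitz on bounded sets. -/
def LipOnBoundedV {Δ : ℝ≥0} {n : ℕ} (V : Hist Δ n → ℝ) : Prop :=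
  ∀ r : ℝ, 0 < r → ∃ L : ℝ, 0 < L ∧
    ∀ φ₁ φ₂ : Hist Δ n, ‖φ₁‖ ≤ r → ‖φ₂‖ ≤ r → |V φ₁ - V φ₂| ≤ L * ‖φ₁ - φ₂‖

/-- A functional `V : 𝒳ⁿ → ℝ` locally Lipschitz. -/
def LocallyLipV {Δ : ℝ≥0} {n : ℕ} (V : Hist Δ n → ℝ) : Prop :=
  ∀ φ : Hist Δ n, ∃ δ : ℝ, 0 < δ ∧ ∃ L : ℝ, 0 < L ∧
    ∀ φ₁ φ₂ : Hist Δ n, ‖φ₁ - φ‖ ≤ δ → ‖φ₂ - φ‖ ≤ δ → |V φ₁ - V φ₂| ≤ L * ‖φ₁ - φ₂‖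

/-! ### Solutions -/

/-- `x` is a solution of `ẋ(t) = f(x_t, u(t))` with initial state `x₀` on `[0, tmax)`. -/
structure IsSolution (Δ : ℝ≥0) {n m : ℕ} (f : Hist Δ n → Vec m → Vec n)
    (u : ℝ → Vec m) (x₀ : Hist Δ n) (tmax : EReal) (x : ℝ → Vec n) : Prop where
  tmax_pos : 0 < tmax
  cont : ContinuousOn x {s : ℝ | -(Δ : ℝ) ≤ s ∧ (s : EReal) < tmax}
  init : ∀ τ : Icc (-(Δ : ℝ)) (0 : ℝ), x τ.1 = x₀ τ
  integrable : ∀ t : ℝ, 0 ≤ t → (t : EReal) < tmax →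
    IntervalIntegrable (fun s => f (seg Δ x s) (u s)) volume 0 t
  integral_eq : ∀ t : ℝ, 0 ≤ t → (t : EReal) < tmax →
    x t = x 0 + ∫ s in (0:ℝ)..t, f (seg Δ x s) (u s)

/-- Maximal solution: a solution admitting no proper extension. -/
def IsMaxSolution (Δ : ℝ≥0) {n m : ℕ} (f : Hist Δ n → Vec m → Vec n)
    (u : ℝ → Vec m) (x₀ : Hist Δ n) (tmax : EReal) (x : ℝ → Vec n) : Prop :=
  IsSolution Δ f u x₀ tmax x ∧
    ∀ (tmax' : EReal) (x' : ℝ → Vec n), IsSolution Δ f u x₀ tmax' x' →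
      (∀ t : ℝ, -(Δ : ℝ) ≤ t → (t : EReal) < tmax → x' t = x t) → tmax' ≤ tmax

/-- Solution of the input-free system `ẋ(t) = f₀(x_t)`. -/
def IsSolution₀ (Δ : ℝ≥0) {n : ℕ} (f₀ : Hist Δ n → Vec n) (x₀ : Hist Δ n)
    (tmax : EReal) (x : ℝ → Vec n) : Prop :=
  IsSolution Δ (fun φ (_ : Vec 0) => f₀ φ) (fun _ => 0) x₀ tmax x

/-- Maximal solution of the input-free system `ẋ(t) = f₀(x_t)`. -/
def IsMaxSolution₀ (Δ : ℝ≥0) {n : ℕ} (f₀ : Hist Δ n → Vec n) (x₀ : Hist Δ n)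
    (tmax : EReal) (x : ℝ → Vec n) : Prop :=
  IsMaxSolution Δ (fun φ (_ : Vec 0) => f₀ φ) (fun _ => 0) x₀ tmax x

/-! ### Stability properties (input-free systems) -/

/-- Global asymptotic stability (GAS). -/
def GAS (Δ : ℝ≥0) {n : ℕ} (f₀ : Hist Δ n → Vec n) : Prop :=
  ∃ β : ℝ → ℝ → ℝ, ClassKL β ∧
    ∀ (x₀ : Hist Δ n) (tmax : EReal) (x : ℝ → Vec n),
      IsMaxSolution₀ Δ f₀ x₀ tmax x →
        tmax = ⊤ ∧ ∀ t : ℝ, 0 ≤ t → ‖x t‖ ≤ β ‖x₀‖ t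

/-- Global exponential stability (GES). -/
def GES (Δ : ℝ≥0) {n : ℕ} (f₀ : Hist Δ n → Vec n) : Prop :=
  ∃ k : ℝ, 1 ≤ k ∧ ∃ lam : ℝ, 0 < lam ∧
    ∀ (x₀ : Hist Δ n) (tmax : EReal) (x : ℝ → Vec n),
      IsMaxSolution₀ Δ f₀ x₀ tmax x →
        tmax = ⊤ ∧ ∀ t : ℝ, 0 ≤ t → ‖x t‖ ≤ k * ‖x₀‖ * Real.exp (-lam * t)

/-- (Local) asymptotic stability (AS) of the origin. -/
def AS (Δ : ℝ≥0) {n : ℕ} (f₀ : Hist Δ n → Vec n) : Prop :=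
  ∃ r : ℝ, 0 < r ∧ ∃ β : ℝ → ℝ → ℝ, ClassKL β ∧
    ∀ (x₀ : Hist Δ n) (tmax : EReal) (x : ℝ → Vec n),
      IsMaxSolution₀ Δ f₀ x₀ tmax x → ‖x₀‖ ≤ r →
        tmax = ⊤ ∧ ∀ t : ℝ, 0 ≤ t → ‖x t‖ ≤ β ‖x₀‖ t

/-- (Local) exponential stability (ES) of the origin. -/
def ES (Δ : ℝ≥0) {n : ℕ} (f₀ : Hist Δ n → Vec n) : Prop :=
  ∃ r : ℝ, 0 < r ∧ ∃ k : ℝ, 1 ≤ k ∧ ∃ lam : ℝ, 0 < lam ∧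
    ∀ (x₀ : Hist Δ n) (tmax : EReal) (x : ℝ → Vec n),
      IsMaxSolution₀ Δ f₀ x₀ tmax x → ‖x₀‖ ≤ r →
        tmax = ⊤ ∧ ∀ t : ℝ, 0 ≤ t → ‖x t‖ ≤ k * ‖x₀‖ * Real.exp (-lam * t)

/-! ### Forward completeness -/

/-- Robust forward completeness (RFC) of `ẋ(t) = f(x_t,u(t))`. -/
def RFC (Δ : ℝ≥0) {n m : ℕ} (f : Hist Δ n → Vec m → Vec n) : Prop :=
  (∀ (x₀ : Hist Δ n) (u : ℝ → Vec m) (tmax : EReal) (x : ℝ → Vec n),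
      IsInput u → IsMaxSolution Δ f u x₀ tmax x → tmax = ⊤) ∧
    ∀ T : ℝ, 0 < T → ∀ r : ℝ, 0 < r → ∃ C : ℝ,
      ∀ (x₀ : Hist Δ n) (u : ℝ → Vec m) (tmax : EReal) (x : ℝ → Vec n),
        IsInput u → IsMaxSolution Δ f u x₀ tmax x →
          ‖x₀‖ ≤ r → essBnd u (Ici 0) ≤ r →
            ∀ t : ℝ, t ∈ Icc (0 : ℝ) T → ‖seg Δ x t‖ ≤ C

/-- Robust forward completeness of the input-free system `ẋ(t) = f₀(x_t)`. -/
def RFC₀ (Δ : ℝ≥0) {n : ℕ} (f₀ : Hist Δ n → Vec n) : Prop :=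
  RFC Δ (fun φ (_ : Vec 0) => f₀ φ)

/-! ### Input-to-state stability notions -/

/-- Input-to-state stability (ISS). -/
def ISS (Δ : ℝ≥0) {n m : ℕ} (f : Hist Δ n → Vec m → Vec n) : Prop :=
  ∃ β : ℝ → ℝ → ℝ, ∃ μ : ℝ → ℝ, ClassKL β ∧ ClassN μ ∧
    ∀ (x₀ : Hist Δ n) (u : ℝ → Vec m) (tmax : EReal) (x : ℝ → Vec n),
      IsInput u → IsMaxSolution Δ f u x₀ tmax x →
        tmax = ⊤ ∧ ∀ t : ℝ, 0 ≤ t → ‖x t‖ ≤ β ‖x₀‖ t + μ (essBnd u (Icc 0 t))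

/-- Local input-to-state stability (LISS). -/
def LISS (Δ : ℝ≥0) {n m : ℕ} (f : Hist Δ n → Vec m → Vec n) : Prop :=
  ∃ r : ℝ, 0 < r ∧ ∃ β : ℝ → ℝ → ℝ, ∃ μ : ℝ → ℝ, ClassKL β ∧ ClassN μ ∧
    ∀ (x₀ : Hist Δ n) (u : ℝ → Vec m) (tmax : EReal) (x : ℝ → Vec n),
      IsInput u → IsMaxSolution Δ f u x₀ tmax x →
        ‖x₀‖ ≤ r → essBnd u (Ici 0) ≤ r →
          tmax = ⊤ ∧ ∀ t : ℝ, 0 ≤ t → ‖x t‖ ≤ β ‖x₀‖ t + μ (essBnd u (Icc 0 t))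

/-- Integral input-to-state stability (iISS). -/
def iISS (Δ : ℝ≥0) {n m : ℕ} (f : Hist Δ n → Vec m → Vec n) : Prop :=
  ∃ β : ℝ → ℝ → ℝ, ∃ η μ : ℝ → ℝ, ClassKL β ∧ ClassN η ∧ ClassN μ ∧
    ∀ (x₀ : Hist Δ n) (u : ℝ → Vec m) (tmax : EReal) (x : ℝ → Vec n),
      IsInput u → IsMaxSolution Δ f u x₀ tmax x →
        tmax = ⊤ ∧ ∀ t : ℝ, 0 ≤ t →
          ‖x t‖ ≤ β ‖x₀‖ t + η (∫ s in (0:ℝ)..t, μ ‖u s‖)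

/-- The UBEBS estimate with offset `c`. -/
def UBEBSwith (Δ : ℝ≥0) {n m : ℕ} (f : Hist Δ n → Vec m → Vec n) (c : ℝ) : Prop :=
  ∃ α ξ ζ : ℝ → ℝ, ClassKinf α ∧ ClassKinf ξ ∧ ClassKinf ζ ∧
    ∀ (x₀ : Hist Δ n) (u : ℝ → Vec m) (tmax : EReal) (x : ℝ → Vec n),
      IsInput u → IsMaxSolution Δ f u x₀ tmax x →
        tmax = ⊤ ∧ ∀ t : ℝ, 0 ≤ t →
          α ‖x t‖ ≤ ξ ‖x₀‖ + (∫ s in (0:ℝ)..t, ζ ‖u s‖) + c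

/-! ### Lyapunov–Krasovskii functionals -/

/-- Lyapunov–Krasovskii functional candidate (LKF). -/
def IsLKF {Δ : ℝ≥0} {n : ℕ} (V : Hist Δ n → ℝ) : Prop :=
  (∀ φ, 0 ≤ V φ) ∧ LipOnBoundedV V ∧
    ∃ α₁ α₂ : ℝ → ℝ, ClassKinf α₁ ∧ ClassKinf α₂ ∧
      ∀ φ : Hist Δ n, α₁ ‖ev0 φ‖ ≤ V φ ∧ V φ ≤ α₂ ‖φ‖

/-- Coercive Lyapunov–Krasovskii functional candidate. -/
def IsCoerciveLKF {Δ : ℝ≥0} {n : ℕ} (V : Hist Δ n → ℝ) : Prop :=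
  (∀ φ, 0 ≤ V φ) ∧ LipOnBoundedV V ∧
    ∃ α₁ α₂ : ℝ → ℝ, ClassKinf α₁ ∧ ClassKinf α₂ ∧
      ∀ φ : Hist Δ n, α₁ ‖φ‖ ≤ V φ ∧ V φ ≤ α₂ ‖φ‖

end

/-!
By linearity `c • x` solves `ẋ = A x_t` whenever `x` does, so the AS estimate on the ball of
radius `r` rescales to `‖x(t)‖ ≤ ‖x₀‖ β(r, t) / r` for every initial state. By time invariance
`t ↦ x(t + s)` is the solution starting from `x_s`. Choosing `T` with `β(r, T - Δ) ≤ r / 2` thus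
gives `‖x_{s+T}‖ ≤ ‖x_s‖ / 2`, and iterating yields decay at the exponential rate `log 2 / T`.
-/

open Real

section Segments

variable {Δ : ℝ≥0} {n : ℕ}

lemma seg_apply {x : ℝ → Vec n} {t : ℝ} (hx : ContinuousOn x (Icc (t - Δ) t))
    (τ : Icc (-(Δ : ℝ)) 0) : seg Δ x t τ = x (t + τ) := by
  rw [seg, dif_pos hx]
  rfl

lemma norm_seg_le {x : ℝ → Vec n} {t C : ℝ} (hx : ContinuousOn x (Icc (t - Δ) t)) (hC : 0 ≤ C)
    (hb : ∀ τ ∈ Icc (t - Δ) t, ‖x τ‖ ≤ C) : ‖seg Δ x t‖ ≤ C := by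
  refine (ContinuousMap.norm_le _ hC).2 fun τ => ?_
  rw [seg_apply hx]
  exact hb _ ⟨by linarith [τ.2.1], by linarith [τ.2.2]⟩

lemma seg_smul (x : ℝ → Vec n) {c : ℝ} (hc : c ≠ 0) (t : ℝ) :
    seg Δ (c • x) t = c • seg Δ x t := by
  by_cases hx : ContinuousOn x (Icc (t - Δ) t)
  · ext1 τ
    rw [ContinuousMap.smul_apply, seg_apply hx, seg_apply (hx.const_smul c), Pi.smul_apply]
  · have hcx : ¬ContinuousOn (c • x) (Icc (t - Δ) t) := fun h =>
      hx ((continuousOn_const_smul_iff₀ hc).1 h)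
    rw [seg, seg, dif_neg hx, dif_neg hcx]
    exact (smul_zero (A := Hist Δ n) c).symm

lemma ContinuousOn.comp_add_const_Icc {X : Type*} [TopologicalSpace X] {x : ℝ → X} {a b c : ℝ}
    (hx : ContinuousOn x (Icc (a + c) (b + c))) : ContinuousOn (fun τ => x (τ + c)) (Icc a b) :=
  hx.comp (continuous_add_const c).continuousOn fun _ hτ => ⟨by linarith [hτ.1], by linarith [hτ.2]⟩

lemma seg_comp_add_const (x : ℝ → Vec n) (s t : ℝ) :
    seg Δ (fun τ => x (τ + s)) t = seg Δ x (t + s) := by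
  have hiff : ContinuousOn (fun τ => x (τ + s)) (Icc (t - Δ) t) ↔
      ContinuousOn x (Icc (t + s - Δ) (t + s)) := by
    refine ⟨fun h => ?_, fun h => ContinuousOn.comp_add_const_Icc (by convert h using 2; ring)⟩
    have := ContinuousOn.comp_add_const_Icc (c := -s) (a := t + s - Δ) (b := t + s)
      (by convert h using 2 <;> ring)
    simpa using this
  by_cases hx : ContinuousOn x (Icc (t + s - Δ) (t + s))
  · ext1 τ
    rw [seg_apply hx, seg_apply (hiff.2 hx), add_right_comm]
  · rw [seg, seg, dif_neg hx, dif_neg (by rwa [hiff])]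

end Segments

section Solutions

variable {Δ : ℝ≥0} {n m : ℕ} {f : Hist Δ n → Vec m → Vec n} {u : ℝ → Vec m} {x₀ : Hist Δ n}
  {x : ℝ → Vec n}

lemma IsSolution.continuousOn_Ici (h : IsSolution Δ f u x₀ ⊤ x) : ContinuousOn x (Ici (-Δ)) := by
  simpa [Ici] using h.cont

lemma IsSolution.continuousOn_Icc (h : IsSolution Δ f u x₀ ⊤ x) {t : ℝ} (ht : 0 ≤ t) :
    ContinuousOn x (Icc (t - Δ) t) :=
  h.continuousOn_Ici.mono fun _ hτ => by simp only [mem_Ici]; linarith [hτ.1]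

lemma IsSolution.seg_zero (h : IsSolution Δ f u x₀ ⊤ x) : seg Δ x 0 = x₀ := by
  ext1 τ
  rw [seg_apply (h.continuousOn_Icc le_rfl), zero_add, h.init]

lemma IsSolution.comp_add_const (h : IsSolution Δ f u x₀ ⊤ x) {s : ℝ} (hs : 0 ≤ s) :
    IsSolution Δ f (fun t => u (t + s)) (seg Δ x s) ⊤ fun t => x (t + s) := by
  have hrhs : (fun t => f (seg Δ (fun τ => x (τ + s)) t) (u (t + s))) =
      fun t => f (seg Δ x (t + s)) (u (t + s)) := by
    simp only [seg_comp_add_const]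
  have hint : ∀ t, 0 ≤ t → IntervalIntegrable (fun t => f (seg Δ x t) (u t)) volume s (t + s) :=
    fun t ht => (h.integrable (t + s) (by linarith) (EReal.coe_lt_top _)).mono_set <| by
      rw [uIcc_of_le (by linarith), uIcc_of_le (by linarith)]
      exact Icc_subset_Icc hs le_rfl
  refine
  { tmax_pos := h.tmax_pos
    cont := ?_
    init := fun τ => by rw [seg_apply (h.continuousOn_Icc hs), add_comm]
    integrable := fun t ht _ => by
      rw [hrhs]
      simpa using (hint t ht).comp_add_right s
    integral_eq := fun t ht _ => ?_ }
  · simp only [EReal.coe_lt_top, and_true]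
    exact h.continuousOn_Ici.comp (continuous_add_const s).continuousOn
      fun τ hτ => by simp only [mem_ofPred_eq, mem_Ici] at hτ ⊢; linarith
  · rw [hrhs, intervalIntegral.integral_comp_add_right (fun t => f (seg Δ x t) (u t)), zero_add,
      h.integral_eq _ (by linarith) (EReal.coe_lt_top _), h.integral_eq s hs (EReal.coe_lt_top _),
      add_assoc, intervalIntegral.integral_add_adjacent_intervals
        (h.integrable s hs (EReal.coe_lt_top _)) (hint t ht)]

variable {A : Hist Δ n →L[ℝ] Vec n} {tmax : EReal}

lemma IsSolution₀.smul (h : IsSolution₀ Δ (fun φ => A φ) x₀ tmax x) {c : ℝ} (hc : c ≠ 0) :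
    IsSolution₀ Δ (fun φ => A φ) (c • x₀) tmax (c • x) := by
  have hrhs : (fun t => A (seg Δ (c • x) t)) = c • fun t => A (seg Δ x t) := by
    ext1 t
    rw [seg_smul x hc, map_smul, Pi.smul_apply]
  exact
  { tmax_pos := h.tmax_pos
    cont := h.cont.const_smul c
    init := fun τ => by rw [Pi.smul_apply, h.init, ContinuousMap.smul_apply]
    integrable := fun t ht htm => by
      change IntervalIntegrable (fun t => A (seg Δ (c • x) t)) _ _ _
      rw [hrhs]
      exact (h.integrable t ht htm).smul c
    integral_eq := fun t ht htm => by
      change c • x t = c • x 0 + ∫ s in (0 : ℝ)..t, A (seg Δ (c • x) s)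
      rw [hrhs, Pi.smul_def, intervalIntegral.integral_smul, h.integral_eq t ht htm, smul_add] }

lemma IsMaxSolution₀.smul (h : IsMaxSolution₀ Δ (fun φ => A φ) x₀ tmax x) {c : ℝ} (hc : c ≠ 0) :
    IsMaxSolution₀ Δ (fun φ => A φ) (c • x₀) tmax (c • x) := by
  refine ⟨IsSolution₀.smul h.1 hc, fun tmax' x' hx' hagree => h.2 tmax' (c⁻¹ • x') ?_ ?_⟩
  · have := IsSolution₀.smul hx' (inv_ne_zero hc)
    rwa [smul_smul, inv_mul_cancel₀ hc, one_smul] at this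
  · intro t h₁ h₂
    rw [Pi.smul_apply, hagree t h₁ h₂, Pi.smul_apply, inv_smul_smul₀ hc]

end Solutions

section Stability

variable {Δ : ℝ≥0} {n : ℕ}

lemma classKL_mul_exp {k lam : ℝ} (hk : 0 < k) (hlam : 0 < lam) :
    ClassKL fun s t => k * s * exp (-lam * t) := by
  refine ⟨fun t _ => ⟨by fun_prop, fun a _ b _ hab => by dsimp only; gcongr, by simp⟩,
    fun s hs => ⟨by fun_prop, fun a _ b _ hab => ?_, ?_⟩⟩
  · simp only [neg_mul]
    gcongr
  have hexp : Tendsto (fun t => exp (-lam * t)) atTop (𝓝 0) :=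
    tendsto_exp_atBot.comp <| tendsto_id.const_mul_atTop_of_neg (neg_neg_of_pos hlam)
  simpa using hexp.const_mul (k * s)

lemma GES.AS {f₀ : Hist Δ n → Vec n} (h : GES Δ f₀) : AS Δ f₀ := by
  obtain ⟨k, hk, lam, hlam, hdecay⟩ := h
  exact ⟨1, one_pos, _, classKL_mul_exp (by linarith) hlam,
    fun x₀ tmax x hx _ => hdecay x₀ tmax x hx⟩

lemma AntitoneOn.nonneg_of_tendsto_zero {g : ℝ → ℝ} (hanti : AntitoneOn g (Ici 0))
    (hlim : Tendsto g atTop (𝓝 0)) {t : ℝ} (ht : 0 ≤ t) : 0 ≤ g t :=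
  le_of_tendsto hlim <| eventually_atTop.2
    ⟨t, fun _ hs => hanti (mem_Ici.2 ht) (mem_Ici.2 (ht.trans hs)) hs⟩

lemma le_two_mul_exp_of_halving {a b : ℝ → ℝ} {T M : ℝ} (hT : 0 < T) (hM : 0 ≤ M)
    (ha₀ : 0 ≤ a 0) (half : ∀ s, 0 ≤ s → a (s + T) ≤ a s / 2)
    (bound : ∀ s, 0 ≤ s → ∀ t, 0 ≤ t → b (t + s) ≤ a s * M) {t : ℝ} (ht : 0 ≤ t) :
    b t ≤ 2 * M * a 0 * exp (-(log 2 / T) * t) := by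
  have hiter : ∀ m : ℕ, a (m * T) ≤ a 0 / 2 ^ m := by
    intro m
    induction m with
    | zero => simp
    | succ m ih =>
      calc a ((m + 1 : ℕ) * T) = a (m * T + T) := by push_cast; ring_nf
        _ ≤ a (m * T) / 2 := half _ (by positivity)
        _ ≤ a 0 / 2 ^ m / 2 := by gcongr
        _ = a 0 / 2 ^ (m + 1) := by ring
  set m := ⌊t / T⌋₊
  have hmT : m * T ≤ t := (le_div_iff₀ hT).1 (Nat.floor_le (by positivity))
  have hexp : exp (-(m * log 2)) ≤ 2 * exp (-(log 2 / T) * t) := by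
    have hlt : t / T < m + 1 := Nat.lt_floor_add_one _
    rw [← exp_log two_pos, ← exp_add, exp_log two_pos]
    gcongr
    rw [div_lt_iff₀ hT] at hlt
    have := log_pos one_lt_two
    calc -(m * log 2) = log 2 - (m + 1) * T * log 2 / T := by field_simp; ring
      _ ≤ log 2 - t * log 2 / T := by gcongr
      _ = log 2 + -(log 2 / T) * t := by ring
  calc b t = b ((t - m * T) + m * T) := by rw [sub_add_cancel]
    _ ≤ a (m * T) * M := bound _ (by positivity) _ (by linarith)
    _ ≤ a 0 / 2 ^ m * M := by gcongr; exact hiter m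
    _ = M * a 0 * exp (-(m * log 2)) := by
      rw [exp_neg, exp_nat_mul, exp_log two_pos]; ring
    _ ≤ M * a 0 * (2 * exp (-(log 2 / T) * t)) := by gcongr
    _ = 2 * M * a 0 * exp (-(log 2 / T) * t) := by ring

def LinearDecayBound (Δ : ℝ≥0) {n : ℕ} (f₀ : Hist Δ n → Vec n) (g : ℝ → ℝ) : Prop :=
  ∀ (x₀ : Hist Δ n) (tmax : EReal) (x : ℝ → Vec n), IsMaxSolution₀ Δ f₀ x₀ tmax x →
    tmax = ⊤ ∧ ∀ t : ℝ, 0 ≤ t → ‖x t‖ ≤ ‖x₀‖ * g t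

lemma AS.exists_linearDecayBound {A : Hist Δ n →L[ℝ] Vec n} (h : AS Δ fun φ => A φ) :
    ∃ g : ℝ → ℝ, AntitoneOn g (Ici 0) ∧ Tendsto g atTop (𝓝 0) ∧
      LinearDecayBound Δ (fun φ => A φ) g := by
  obtain ⟨r, hr, β, hβ, hAS⟩ := h
  obtain ⟨-, hanti, hlim⟩ := hβ.2 r hr.le
  refine ⟨fun t => β r t / r,
    fun s hs t ht hst => div_le_div_of_nonneg_right (hanti hs ht hst) hr.le,
    by simpa using hlim.div_const r, fun x₀ tmax x hx => ?_⟩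
  rcases eq_or_ne x₀ 0 with rfl | hx₀
  · obtain ⟨htop, hb⟩ := hAS 0 tmax x hx (by simpa using hr.le)
    exact ⟨htop, fun t ht => by simpa [(hβ.1 t ht).2.2] using hb t ht⟩
  -- rescale `x₀` onto the sphere of radius `r`, where the AS estimate applies
  have hx₀' : 0 < ‖x₀‖ := norm_pos_iff.2 hx₀
  set c := r / ‖x₀‖
  have hc : 0 < c := by positivity
  have hcx₀ : ‖c • x₀‖ = r := by
    rw [norm_smul, Real.norm_of_nonneg hc.le, div_mul_cancel₀ _ hx₀'.ne']
  obtain ⟨htop, hb⟩ := hAS _ _ _ (hx.smul hc.ne') hcx₀.le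
  refine ⟨htop, fun t ht => ?_⟩
  have hbt := hb t ht
  rw [hcx₀, Pi.smul_apply, norm_smul, Real.norm_of_nonneg hc.le, div_mul_eq_mul_div,
    div_le_iff₀ hx₀'] at hbt
  rw [mul_div_assoc', le_div_iff₀ hr]
  linarith

lemma LinearDecayBound.GES {f₀ : Hist Δ n → Vec n} {g : ℝ → ℝ} (hanti : AntitoneOn g (Ici 0))
    (hlim : Tendsto g atTop (𝓝 0)) (hg : LinearDecayBound Δ f₀ g) : GES Δ f₀ := by
  obtain ⟨T₀, hT₀, hT₀_one⟩ :=
    ((hlim.eventually (gt_mem_nhds (by norm_num : (0 : ℝ) < 1 / 2))).and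
      (eventually_ge_atTop 1)).exists
  set T := T₀ + Δ
  have hT : 0 < T := by positivity
  have hg₀ : 0 ≤ g 0 := hanti.nonneg_of_tendsto_zero hlim le_rfl
  refine ⟨max 1 (2 * g 0), le_max_left _ _, log 2 / T, div_pos (log_pos one_lt_two) hT,
    fun x₀ tmax x hx => ?_⟩
  obtain ⟨rfl, -⟩ := hg x₀ tmax x hx
  have hsol := hx.1
  have hshift : ∀ s, 0 ≤ s → ∀ t, 0 ≤ t → ‖x (t + s)‖ ≤ ‖seg Δ x s‖ * g t := fun s hs =>
    (hg _ _ _ ⟨hsol.comp_add_const hs, fun _ _ _ _ => le_top⟩).2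
  have half : ∀ s, 0 ≤ s → ‖seg Δ x (s + T)‖ ≤ ‖seg Δ x s‖ / 2 := fun s hs =>
    norm_seg_le (hsol.continuousOn_Icc (by positivity)) (by positivity) fun τ hτ => by
      have hτs : T₀ ≤ τ - s := by linarith [hτ.1]
      calc ‖x τ‖ = ‖x ((τ - s) + s)‖ := by rw [sub_add_cancel]
        _ ≤ ‖seg Δ x s‖ * g (τ - s) := hshift s hs _ (by linarith)
        _ ≤ ‖seg Δ x s‖ * (1 / 2) := by
          gcongr
          exact (hanti (mem_Ici.2 (by linarith)) (mem_Ici.2 (by linarith)) hτs).trans hT₀.le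
        _ = ‖seg Δ x s‖ / 2 := by ring
  have bound : ∀ s, 0 ≤ s → ∀ t, 0 ≤ t → ‖x (t + s)‖ ≤ ‖seg Δ x s‖ * g 0 := fun s hs t ht =>
    (hshift s hs t ht).trans <| by gcongr; exact hanti (mem_Ici.2 le_rfl) (mem_Ici.2 ht) ht
  refine ⟨rfl, fun t ht => ?_⟩
  calc ‖x t‖ ≤ 2 * g 0 * ‖seg Δ x 0‖ * exp (-(log 2 / T) * t) :=
        le_two_mul_exp_of_halving (a := fun s => ‖seg Δ x s‖) (b := fun t => ‖x t‖) hT hg₀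
          (norm_nonneg _) half bound ht
    _ ≤ max 1 (2 * g 0) * ‖x₀‖ * exp (-(log 2 / T) * t) := by
        rw [hsol.seg_zero]; gcongr; exact le_max_right _ _

end Stability

/-- A linear time-invariant time-delay system is GES iff its origin is AS. -/
theorem linear_ges_iff_as
    (Δ : ℝ≥0) (n : ℕ) (A : Hist Δ n →L[ℝ] Vec n) :
    GES Δ (fun φ => A φ) ↔ AS Δ (fun φ => A φ) := by
  refine ⟨GES.AS, fun h => ?_⟩
  obtain ⟨g, hanti, hlim, hg⟩ := h.exists_linearDecayBound
  exact hg.GES hanti hlim
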